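/- arXiv:2208.07940 — 8 statements merged into one kernel-verified Lean document; each statement's English description precedes it below -/
import Mathlib

section
/- Every cyclic-uniform uniserial module is uniform: if M is a cu-uniserial left R-module, then every pair of nonzero submodules of M has nonzero intersection. -/
/-- The radical of a module: intersection of all maximal submodules. -/
def ModRadical (R M : Type*) [Ring R] [AddCommGroup M] [Module R M] : Submodule R M :=
  sInf {N : Submodule R M | IsCoatom N}

/-- A module is cyclic if it is generated by one element. -/
def IsCyclicMod (R M : Type*) [Ring R] [AddCommGroup M] [Module R M] : Prop :=
  ∃ x : M, Submodule.span R {x} = ⊤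

/-- A module is uniform if it is nonzero and any two nonzero submodules intersect nontrivially. -/
def IsUniformMod (R M : Type*) [Ring R] [AddCommGroup M] [Module R M] : Prop :=
  Nontrivial M ∧ ∀ A B : Submodule R M, A ≠ ⊥ → B ≠ ⊥ → A ⊓ B ≠ ⊥

/-- A module is cyclic-uniform uniserial (cu-uniserial) if it is nonzero and for every
nonzero finitely generated submodule `K`, the quotient `K / Rad K` is cyclic and uniform. -/
def IsCUUniserial (R M : Type*) [Ring R] [AddCommGroup M] [Module R M] : Prop :=
  Nontrivial M ∧ ∀ K : Submodule R M, K ≠ ⊥ → K.FG →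
    IsCyclicMod R (↥K ⧸ ModRadical R ↥K) ∧ IsUniformMod R (↥K ⧸ ModRadical R ↥K)

/-! If `A ⊓ B = ⊥`, take nonzero `a ∈ A`, `b ∈ B`, so that `K = Ra ⊕ Rb` is a nonzero
finitely generated submodule. The radical of `K` is stable under every endomorphism, in
particular under the projections onto the two summands; hence the images of `Ra` and `Rb` in
`K / Rad K` meet trivially. Neither image is zero: `Ra ≤ Rad K` would give `Rad (Ra) = Ra`
after projecting, which is impossible for a nonzero finitely generated module. So `K / Rad K`
is not uniform. -/

open Submodule Module

section Jacobson

variable {R N : Type*} [Ring R] [AddCommGroup N] [Module R N] {p q : Submodule R N}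

theorem mem_jacobson_of_sub_mem_jacobson (hpq : IsCompl p q) {x y : N} (hx : x ∈ p)
    (hy : y ∈ q) (hxy : x - y ∈ jacobson R N) : x ∈ jacobson R N := by
  have hproj : p.projection q hpq (x - y) = x := by
    rw [map_sub, projection_apply_of_mem_left hpq hx, projection_apply_of_mem_right hpq hy,
      sub_zero]
  exact hproj ▸ map_jacobson_le _ (mem_map_of_mem hxy)

theorem disjoint_map_mkQ_jacobson (hpq : IsCompl p q) :
    Disjoint (p.map (jacobson R N).mkQ) (q.map (jacobson R N).mkQ) := by
  rw [disjoint_iff_inf_le]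
  rintro _ ⟨⟨x, hx, rfl⟩, ⟨y, hy, hxy⟩⟩
  rw [mkQ_apply, mkQ_apply, Submodule.Quotient.eq] at hxy
  rw [mem_bot, mkQ_apply, Quotient.mk_eq_zero]
  exact mem_jacobson_of_sub_mem_jacobson hpq hx hy (neg_sub y x ▸ neg_mem hxy)

theorem map_mkQ_jacobson_ne_bot (hpq : IsCompl p q) (hp : p ≠ ⊥) (hfg : p.FG) :
    p.map (jacobson R N).mkQ ≠ ⊥ := by
  have : Nontrivial p := nontrivial_iff_ne_bot.mpr hp
  have : Module.Finite R p := Module.Finite.iff_fg.mpr hfg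
  intro hbot
  have hle : p ≤ jacobson R N := by rwa [← ker_mkQ (jacobson R N), LinearMap.le_ker_iff_map]
  refine (jacobson_lt_top R p).ne (eq_top_iff.mpr fun z _ => ?_)
  rw [← projectionOnto_apply_left hpq z]
  exact map_jacobson_le _ (mem_map_of_mem (hle z.2))

theorem not_isUniformMod_quotient_jacobson_of_isCompl (hpq : IsCompl p q) (hp : p ≠ ⊥)
    (hq : q ≠ ⊥) (hpfg : p.FG) (hqfg : q.FG) : ¬ IsUniformMod R (N ⧸ jacobson R N) :=
  fun ⟨_, huniform⟩ => huniform _ _ (map_mkQ_jacobson_ne_bot hpq hp hpfg)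
    (map_mkQ_jacobson_ne_bot hpq.symm hq hqfg) (disjoint_map_mkQ_jacobson hpq).eq_bot

end Jacobson

section Subtype

variable {R M : Type*} [Ring R] [AddCommGroup M] [Module R M] {p q K : Submodule R M}

theorem isCompl_comap_subtype_sup (hpq : Disjoint p q) :
    IsCompl (p.comap (p ⊔ q).subtype) (q.comap (p ⊔ q).subtype) where
  disjoint := by
    rw [disjoint_iff, ← comap_inf, disjoint_iff.mp hpq, comap_bot, ker_subtype]
  codisjoint := by
    rw [codisjoint_iff]
    apply map_injective_of_injective (p ⊔ q).injective_subtype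
    rw [Submodule.map_sup, map_comap_subtype, map_comap_subtype, Submodule.map_top,
      range_subtype, inf_eq_right.mpr le_sup_left, inf_eq_right.mpr le_sup_right]

theorem map_subtype_comap_subtype_of_le (hle : p ≤ K) :
    (p.comap K.subtype).map K.subtype = p := by
  rw [map_comap_subtype, inf_eq_right.mpr hle]

theorem comap_subtype_ne_bot_of_le (hle : p ≤ K) (hp : p ≠ ⊥) : p.comap K.subtype ≠ ⊥ := by
  intro hbot
  rw [← map_subtype_comap_subtype_of_le hle, hbot, Submodule.map_bot] at hp
  exact hp rfl

theorem fg_comap_subtype_of_le (hle : p ≤ K) (hp : p.FG) : (p.comap K.subtype).FG :=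
  fg_of_fg_map_injective K.subtype K.injective_subtype <| by
    rwa [map_subtype_comap_subtype_of_le hle]

theorem not_isUniformMod_sup_quotient_jacobson (hpq : Disjoint p q) (hp : p ≠ ⊥)
    (hq : q ≠ ⊥) (hpfg : p.FG) (hqfg : q.FG) : ¬ IsUniformMod R (↥(p ⊔ q) ⧸ jacobson R ↥(p ⊔ q)) :=
  not_isUniformMod_quotient_jacobson_of_isCompl (isCompl_comap_subtype_sup hpq)
    (comap_subtype_ne_bot_of_le le_sup_left hp) (comap_subtype_ne_bot_of_le le_sup_right hq)
    (fg_comap_subtype_of_le le_sup_left hpfg) (fg_comap_subtype_of_le le_sup_right hqfg)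

end Subtype

theorem stmt0 {R M : Type*} [Ring R] [AddCommGroup M] [Module R M]
    (h : IsCUUniserial R M) :
    ∀ A B : Submodule R M, A ≠ ⊥ → B ≠ ⊥ → A ⊓ B ≠ ⊥ := by
  intro A B hA hB hAB
  obtain ⟨a, haA, ha⟩ := (Submodule.ne_bot_iff A).mp hA
  obtain ⟨b, hbB, hb⟩ := (Submodule.ne_bot_iff B).mp hB
  have hdisj : Disjoint (R ∙ a) (R ∙ b) := by
    rw [disjoint_iff, ← le_bot_iff, ← hAB]
    exact inf_le_inf ((span_singleton_le_iff_mem a A).mpr haA)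
      ((span_singleton_le_iff_mem b B).mpr hbB)
  have hne : (R ∙ a) ⊔ (R ∙ b) ≠ ⊥ := by simp [ha]
  have hfg : ((R ∙ a) ⊔ (R ∙ b)).FG := (fg_span_singleton a).sup (fg_span_singleton b)
  -- `ModRadical` unfolds to Mathlib's `Module.jacobson`.
  exact not_isUniformMod_sup_quotient_jacobson hdisj (by simpa using ha) (by simpa using hb)
    (fg_span_singleton a) (fg_span_singleton b) (h.2 _ hne hfg).2
end

section
/- Every cyclic-uniform uniserial module is Bézout: if M is a cu-uniserial left R-module, then every finitely generated submodule of M is cyclic. -/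
theorem stmt1 {R M : Type*} [Ring R] [AddCommGroup M] [Module R M]
    (h : IsCUUniserial R M) :
    ∀ K : Submodule R M, K.FG → ∃ x : M, K = Submodule.span R {x} := by
  intro K hK
  rcases eq_or_ne K ⊥ with rfl | hKbot
  · exact ⟨0, by simp⟩
  obtain ⟨⟨xbar, hx⟩, -⟩ := h.2 K hKbot hK
  obtain ⟨x, rfl⟩ := Submodule.Quotient.mk_surjective _ xbar
  -- span R {x} ⊔ Rad K = ⊤ in K
  have hsup : Submodule.span R {x} ⊔ ModRadical R ↥K = ⊤ := by
    have h1 : Submodule.map (ModRadical R ↥K).mkQ (Submodule.span R {x}) = ⊤ := by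
      rw [Submodule.map_span, Set.image_singleton]; exact hx
    have h2 := congrArg (Submodule.comap (ModRadical R ↥K).mkQ) h1
    rwa [Submodule.comap_map_eq, Submodule.ker_mkQ, Submodule.comap_top] at h2
  -- span R {x} = ⊤ in K, since Rad K is superfluous (K is f.g., so coatomic)
  have htop : Submodule.span R {x} = (⊤ : Submodule R ↥K) := by
    by_contra hne
    have hcoat : IsCoatomic (Submodule R ↥K) :=
      CompleteLattice.coatomic_of_top_compact
        ((Submodule.fg_iff_compact _).1 ((Submodule.fg_top K).2 hK))
    obtain ⟨m, hm, hle⟩ := (eq_top_or_exists_le_coatom (Submodule.span R {x})).resolve_left hne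
    have hrad : ModRadical R ↥K ≤ m := sInf_le hm
    exact hm.1 (top_le_iff.1 (hsup ▸ sup_le hle hrad))
  refine ⟨(x : M), ?_⟩
  have := congrArg (Submodule.map K.subtype) htop
  rw [Submodule.map_span, Set.image_singleton, Submodule.map_subtype_top,
    Submodule.coe_subtype] at this
  exact this.symm
end

section
/- A semilocal left cu-uniserial ring is local: if R is a ring such that R/J(R) is semisimple and R is cu-uniserial as a left module over itself, then R has a unique maximal left ideal. -/
/-! The radical of the ring as a left module over itself is `J(R)`, so by the cu-uniserial
hypothesis applied to `K = R` the semisimple module `R/J(R)` is uniform. A semisimple uniform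
module has no proper nonzero direct summands, so it is simple; hence `J(R)` is a maximal left
ideal, and since it lies in every maximal left ideal it is the only one. -/

section

variable {R M N : Type*} [Ring R] [AddCommGroup M] [Module R M] [AddCommGroup N] [Module R N]

theorem IsUniformMod.of_linearEquiv (e : M ≃ₗ[R] N) (h : IsUniformMod R M) :
    IsUniformMod R N := by
  obtain ⟨hM, hmeet⟩ := h
  refine ⟨e.symm.toEquiv.nontrivial, fun A B hA hB hAB => ?_⟩
  let f : Submodule R N ≃o Submodule R M := Submodule.orderIsoMapComap e.symm
  refine hmeet (f A) (f B) ((map_eq_bot_iff f).not.mpr hA) ((map_eq_bot_iff f).not.mpr hB) ?_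
  rw [← f.map_inf, hAB, map_bot]

theorem IsUniformMod.isSimpleModule [IsSemisimpleModule R M] (h : IsUniformMod R M) :
    IsSimpleModule R M := by
  obtain ⟨hM, hmeet⟩ := h
  have : Nontrivial (Submodule R M) := (Submodule.nontrivial_iff R).mpr hM
  refine (isSimpleModule_iff R M).mpr
    { eq_bot_or_eq_top := fun A => or_iff_not_imp_left.mpr fun hA => ?_ }
  obtain ⟨B, hAB⟩ := exists_isCompl A
  have hB : B = ⊥ := by
    by_contra hB
    exact hmeet A B hA hB hAB.inf_eq_bot
  simpa [hB] using hAB.sup_eq_top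

theorem IsCUUniserial.isUniformMod_quotient_jacobson (h : IsCUUniserial R R) :
    IsUniformMod R (R ⧸ Ring.jacobson R) := by
  obtain ⟨hR, hK⟩ := h
  obtain ⟨-, hunif⟩ := hK ⊤ top_ne_bot Module.Finite.fg_top
  let e : (⊤ : Submodule R R) ≃ₗ[R] R := Submodule.topEquiv
  -- `ModRadical` is definitionally Mathlib's `Module.jacobson`.
  have hmap : (ModRadical R (⊤ : Submodule R R)).map e.toLinearMap = Ring.jacobson R :=
    Module.map_jacobson_of_bijective (f := e.toLinearMap) e.bijective
  exact hunif.of_linearEquiv (Submodule.Quotient.equiv _ _ e hmap)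

theorem existsUnique_isCoatom_of_isCoatom_jacobson (h : IsCoatom (Ring.jacobson R)) :
    ∃! I : Ideal R, IsCoatom I := by
  refine ⟨Ring.jacobson R, h, fun I hI => ?_⟩
  have : I.IsMaximal := Ideal.isMaximal_def.mpr hI
  exact (h.le_iff.mp (Ring.jacobson_le_of_isMaximal I)).resolve_left hI.1

end

theorem stmt10 {R : Type*} [Ring R]
    [IsSemisimpleModule R (R ⧸ Ideal.jacobson (⊥ : Ideal R))]
    (h : IsCUUniserial R R) :
    ∃! I : Ideal R, IsCoatom I := by
  have hss := ‹IsSemisimpleModule R (R ⧸ Ideal.jacobson (⊥ : Ideal R))›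
  rw [Ideal.jacobson_bot] at hss
  have hsimple : IsSimpleModule R (R ⧸ Ring.jacobson R) :=
    h.isUniformMod_quotient_jacobson.isSimpleModule
  exact existsUnique_isCoatom_of_isCoatom_jacobson (isSimpleModule_iff_isCoatom.mp hsimple)
end

section
/- If R is a local ring (unique maximal left ideal) and R is left cu-uniserial, then R is left uniserial: the left ideals of R are linearly ordered by inclusion. -/
section Helpers

open Submodule

variable {R : Type*} [Ring R] {M : Type*} [AddCommGroup M] [Module R M]

lemma modRadical_le_coatom {P : Submodule R M} (hP : IsCoatom P) : ModRadical R M ≤ P :=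
  sInf_le hP

lemma coatomic_of_fg_top (hfg : (⊤ : Submodule R M).FG) : IsCoatomic (Submodule R M) :=
  CompleteLattice.coatomic_of_top_compact ((Submodule.fg_iff_compact ⊤).mp hfg)

/-- The radical is superfluous in a finitely generated module. -/
lemma eq_top_of_sup_modRadical (hfg : (⊤ : Submodule R M).FG) {N : Submodule R M}
    (hN : N ⊔ ModRadical R M = ⊤) : N = ⊤ := by
  by_contra hne
  obtain ⟨P, hP, hNP⟩ :=
    ((coatomic_of_fg_top hfg).eq_top_or_exists_le_coatom N).resolve_left hne
  have hle : (⊤ : Submodule R M) ≤ P := hN ▸ sup_le hNP (modRadical_le_coatom hP)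
  exact hP.1 (top_le_iff.mp hle)

lemma isCoatom_comap_of_surjective {f : R →ₗ[R] M} (hf : Function.Surjective f)
    {P : Submodule R M} (hP : IsCoatom P) : IsCoatom (P.comap f) := by
  constructor
  · intro htop
    apply hP.1
    rw [← Submodule.map_comap_eq_of_surjective hf P, htop, Submodule.map_top,
      LinearMap.range_eq_top.mpr hf]
  · intro J hJ
    have hker : LinearMap.ker f ≤ P.comap f := by
      intro x hx
      simp [Submodule.mem_comap, LinearMap.mem_ker.mp hx]
    have hPle : P ≤ Submodule.map f J := by
      conv_lhs => rw [← Submodule.map_comap_eq_of_surjective hf P]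
      exact Submodule.map_mono hJ.le
    have hPne : P ≠ Submodule.map f J := by
      intro hEq
      obtain ⟨x, hxJ, hxP⟩ := SetLike.exists_of_lt hJ
      exact hxP (hEq ▸ Submodule.mem_map_of_mem hxJ : f x ∈ P)
    have hmap : Submodule.map f J = ⊤ := hP.2 _ (lt_of_le_of_ne hPle hPne)
    have : J ⊔ LinearMap.ker f = ⊤ := by
      rw [← Submodule.comap_map_eq, hmap, Submodule.comap_top]
    rwa [sup_eq_left.mpr (le_trans hker hJ.le)] at this

/-- If there is a unique maximal left ideal and `M` is a nonzero f.g. module admitting a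
surjection from `R`, then the radical of `M` is a coatom. -/
lemma modRadical_isCoatom (hloc : ∃! I : Ideal R, IsCoatom I)
    {f : R →ₗ[R] M} (hf : Function.Surjective f) (hfg : (⊤ : Submodule R M).FG)
    (hnt : Nontrivial M) : IsCoatom (ModRadical R M) := by
  obtain ⟨m, hm, hmu⟩ := hloc
  have hbot : (⊥ : Submodule R M) ≠ ⊤ := by
    obtain ⟨x, y, hxy⟩ := hnt
    intro hEq
    apply hxy
    have hx : x ∈ (⊥ : Submodule R M) := hEq ▸ Submodule.mem_top
    have hy : y ∈ (⊥ : Submodule R M) := hEq ▸ Submodule.mem_top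
    rw [Submodule.mem_bot] at hx hy
    rw [hx, hy]
  obtain ⟨P, hP, -⟩ :=
    ((coatomic_of_fg_top hfg).eq_top_or_exists_le_coatom ⊥).resolve_left hbot
  have huniq : ∀ Q : Submodule R M, IsCoatom Q → Q = P := by
    intro Q hQ
    have h1 : Q.comap f = m := hmu _ (isCoatom_comap_of_surjective hf hQ)
    have h2 : P.comap f = m := hmu _ (isCoatom_comap_of_surjective hf hP)
    rw [← Submodule.map_comap_eq_of_surjective hf Q,
      ← Submodule.map_comap_eq_of_surjective hf P, h1, h2]
  have hset : {N : Submodule R M | IsCoatom N} = {P} := by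
    ext N
    simp only [Set.mem_setOf_eq, Set.mem_singleton_iff]
    exact ⟨fun hN => huniq N hN, fun hN => hN ▸ hP⟩
  rw [ModRadical, hset, sInf_singleton]
  exact hP

end Helpers

open Submodule in
lemma span_pair_comparable {R : Type*} [Ring R]
    (hloc : ∃! I : Ideal R, IsCoatom I) (h : IsCUUniserial R R) (a b : R) :
    a ∈ Ideal.span {b} ∨ b ∈ Ideal.span {a} := by
  set K : Ideal R := Submodule.span R {a, b} with hKdef
  by_cases hK : K = ⊥
  · left
    have : a ∈ K := subset_span (Set.mem_insert a {b})
    rw [hK, Submodule.mem_bot] at this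
    rw [this]
    exact zero_mem _
  have hKfg : K.FG := Submodule.fg_span (Set.toFinite _)
  obtain ⟨hcyc, -⟩ := h.2 K hK hKfg
  have hnt : Nontrivial ↥K := (Submodule.nontrivial_iff_ne_bot).mpr hK
  have hfin : Module.Finite R ↥K := (Module.Finite.iff_fg).mpr hKfg
  have hfgtop : (⊤ : Submodule R ↥K).FG := Module.finite_def.mp hfin
  set rad := ModRadical R ↥K with hrad
  -- lift a generator of the quotient
  obtain ⟨q, hq⟩ := hcyc
  obtain ⟨x, rfl⟩ := rad.mkQ_surjective q
  have hx : Submodule.span R {x} = ⊤ := by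
    apply eq_top_of_sup_modRadical hfgtop
    have : Submodule.comap rad.mkQ (Submodule.map rad.mkQ (Submodule.span R {x})) = ⊤ := by
      rw [Submodule.map_span, Set.image_singleton, hq, Submodule.comap_top]
    rwa [Submodule.comap_map_eq, Submodule.ker_mkQ] at this
  -- K is cyclic, generated by x
  set φ : R →ₗ[R] ↥K := LinearMap.toSpanSingleton R ↥K x with hφ
  have hφsurj : Function.Surjective φ := by
    rw [← LinearMap.range_eq_top, ← LinearMap.span_singleton_eq_range]
    exact hx
  have hcoatom : IsCoatom rad := modRadical_isCoatom hloc hφsurj hfgtop hnt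
  have hsimple : IsSimpleModule R (↥K ⧸ rad) := isSimpleModule_iff_isCoatom.mpr hcoatom
  -- elements of K
  have haK : a ∈ K := subset_span (Set.mem_insert a {b})
  have hbK : b ∈ K := subset_span (Set.mem_insert_of_mem a rfl)
  set a' : ↥K := ⟨a, haK⟩ with ha'
  set b' : ↥K := ⟨b, hbK⟩ with hb'
  have htop : Submodule.span R {a', b'} = ⊤ := by
    apply Submodule.map_injective_of_injective K.injective_subtype
    rw [Submodule.map_span, Submodule.map_subtype_top]
    have himg : K.subtype '' {a', b'} = {a, b} := by
      rw [Set.image_insert_eq, Set.image_singleton]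
      rfl
    rw [himg, hKdef]
  -- the key dichotomy in the simple quotient
  rcases eq_bot_or_eq_top (Submodule.span R {rad.mkQ a'}) with hbot' | htop'
  · -- mkQ a' = 0, so b' generates the quotient, hence K = span {b'}
    left
    have ha0 : rad.mkQ a' = 0 := Submodule.span_singleton_eq_bot.mp hbot'
    have hqtop : Submodule.span R {rad.mkQ a', rad.mkQ b'} = ⊤ := by
      have : Submodule.map rad.mkQ (Submodule.span R {a', b'}) = ⊤ := by
        rw [htop, Submodule.map_top, Submodule.range_mkQ]
      rwa [Submodule.map_span, Set.image_insert_eq, Set.image_singleton] at this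
    have hbq : Submodule.span R {rad.mkQ b'} = ⊤ := by
      rw [Submodule.span_insert, ha0, Submodule.span_singleton_eq_bot.mpr rfl,
        bot_sup_eq] at hqtop
      exact hqtop
    have hbtop : Submodule.span R {b'} = ⊤ := by
      apply eq_top_of_sup_modRadical hfgtop
      have : Submodule.comap rad.mkQ (Submodule.map rad.mkQ (Submodule.span R {b'})) = ⊤ := by
        rw [Submodule.map_span, Set.image_singleton, hbq, Submodule.comap_top]
      rwa [Submodule.comap_map_eq, Submodule.ker_mkQ] at this
    have : a' ∈ Submodule.span R {b'} := hbtop ▸ Submodule.mem_top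
    have := Submodule.mem_map_of_mem (f := K.subtype) this
    rw [Submodule.map_span, Set.image_singleton] at this
    exact this
  · -- a' generates the quotient, hence K = span {a'}
    right
    have hatop : Submodule.span R {a'} = ⊤ := by
      apply eq_top_of_sup_modRadical hfgtop
      have : Submodule.comap rad.mkQ (Submodule.map rad.mkQ (Submodule.span R {a'})) = ⊤ := by
        rw [Submodule.map_span, Set.image_singleton, htop', Submodule.comap_top]
      rwa [Submodule.comap_map_eq, Submodule.ker_mkQ] at this
    have : b' ∈ Submodule.span R {a'} := hatop ▸ Submodule.mem_top
    have := Submodule.mem_map_of_mem (f := K.subtype) this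
    rw [Submodule.map_span, Set.image_singleton] at this
    exact this

theorem stmt11 {R : Type*} [Ring R]
    (hloc : ∃! I : Ideal R, IsCoatom I)
    (h : IsCUUniserial R R) :
    ∀ I J : Ideal R, I ≤ J ∨ J ≤ I := by
  intro I J
  by_cases hIJ : I ≤ J
  · exact Or.inl hIJ
  · right
    obtain ⟨a, haI, haJ⟩ := Set.not_subset.mp hIJ
    intro b hbJ
    rcases span_pair_comparable hloc h a b with hab | hba
    · exact absurd (J.span_singleton_le_iff_mem.mpr hbJ hab) haJ
    · exact I.span_singleton_le_iff_mem.mpr haI hba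
end

section
/- A commutative Noetherian cu-uniserial ring is either a uniserial ring or a principal ideal domain with zero Jacobson radical. -/
/-!
The radical of a finitely generated module is superfluous, so `K / Rad K` cyclic forces `K`
cyclic and `R` is a principal ideal ring. (`ModRadical` is definitionally Mathlib's
`Module.jacobson`.) The ring `R / J(R)` is reduced and uniform: if `ab ∈ J(R)` with `a, b ∉ J(R)`,
a common nonzero multiple `z` of `a` and `b` modulo `J(R)` has `z² ∈ J(R)`, so `J(R)` is prime.
If `J(R) = 0`, `R` is a domain. Otherwise `J(R) = (j) ≠ 0`; a maximal ideal `(p)` not contained in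
`J(R)` gives `s` with `j (1 - s p) = 0`, so if no maximal ideal lies in `J(R)` then `j = 0`,
hence `R` is local. In a Noetherian local ring with maximal ideal `(p)`, Krull's intersection
theorem writes every nonzero element as `p ^ n` times a unit, so divisibility, and with it
inclusion of ideals, is total.
-/

section Module

variable {R M N : Type*} [Ring R] [AddCommGroup M] [Module R M] [AddCommGroup N] [Module R N]

theorem Module.eq_top_of_sup_jacobson_eq_top [IsCoatomic (Submodule R M)] {P : Submodule R M}
    (h : P ⊔ Module.jacobson R M = ⊤) : P = ⊤ := by
  refine (eq_top_or_exists_le_coatom P).resolve_right ?_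
  rintro ⟨C, hC, hPC⟩
  exact hC.1 (top_le_iff.mp (h ▸ sup_le hPC (sInf_le hC)))

theorem IsCyclicMod.of_quotient_jacobson [IsCoatomic (Submodule R M)]
    (h : IsCyclicMod R (M ⧸ Module.jacobson R M)) : IsCyclicMod R M := by
  obtain ⟨y, hy⟩ := h
  obtain ⟨x, rfl⟩ := Submodule.Quotient.mk_surjective _ y
  refine ⟨x, Module.eq_top_of_sup_jacobson_eq_top ?_⟩
  rw [sup_comm, ← Submodule.comap_map_mkQ, Submodule.map_span, Set.image_singleton]
  simp [hy]

theorem Submodule.isPrincipal_of_isCyclicMod {P : Submodule R M} (h : IsCyclicMod R P) :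
    P.IsPrincipal := by
  obtain ⟨x, hx⟩ := h
  refine ⟨(x : M), ?_⟩
  simpa [Submodule.map_span] using (congrArg (Submodule.map P.subtype) hx).symm

end Module

section CommRing

variable {R : Type*} [CommRing R]

theorem IsCUUniserial.isPrincipalIdealRing [IsNoetherianRing R] (h : IsCUUniserial R R) :
    IsPrincipalIdealRing R := by
  refine ⟨fun K => ?_⟩
  rcases eq_or_ne K ⊥ with rfl | hK
  · exact bot_isPrincipal
  · exact Submodule.isPrincipal_of_isCyclicMod
      (IsCyclicMod.of_quotient_jacobson (h.2 K hK (IsNoetherian.noetherian K)).1)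

theorem Ideal.IsRadical.isPrime_of_isUniformMod {I : Ideal R} (hI : I.IsRadical)
    (hu : IsUniformMod R (R ⧸ I)) : I.IsPrime := by
  obtain ⟨hnt, hu⟩ := hu
  refine ⟨Submodule.Quotient.nontrivial_iff.mp hnt, fun {a b} hab => ?_⟩
  by_contra! ⟨ha, hb⟩
  have hspan : ∀ {x : R}, x ∉ I → (R ∙ Submodule.Quotient.mk (p := I) x) ≠ ⊥ := fun hx => by
    rwa [Ne, Submodule.span_singleton_eq_bot, Submodule.Quotient.mk_eq_zero]
  obtain ⟨z, hz, hz0⟩ := (Submodule.ne_bot_iff _).mp (hu _ _ (hspan ha) (hspan hb))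
  obtain ⟨⟨c, rfl⟩, ⟨d, hd⟩⟩ :=
    And.imp Submodule.mem_span_singleton.mp Submodule.mem_span_singleton.mp (Submodule.mem_inf.mp hz)
  rw [← Submodule.Quotient.mk_smul, ← Submodule.Quotient.mk_smul, Submodule.Quotient.eq,
    smul_eq_mul, smul_eq_mul] at hd
  have hsq : (c * a) ^ 2 ∈ I := by
    rw [show (c * a) ^ 2 = c * d * (a * b) - c * a * (d * b - c * a) by ring]
    exact I.sub_mem (I.mul_mem_left _ hab) (I.mul_mem_left _ hd)
  exact hz0 ((Submodule.Quotient.mk_eq_zero I).mpr (hI ⟨2, hsq⟩))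

theorem IsCUUniserial.isPrime_jacobson (h : IsCUUniserial R R) : (Ring.jacobson R).IsPrime := by
  have : Nontrivial R := h.1
  have hu := (h.2 ⊤ top_ne_bot Module.Finite.fg_top).2
  have hrad : (ModRadical R (⊤ : Ideal R)).map
      ((Submodule.topEquiv : (⊤ : Ideal R) ≃ₗ[R] R) : (⊤ : Ideal R) →ₗ[R] R) = Ring.jacobson R :=
    Module.map_jacobson_of_bijective Submodule.topEquiv.bijective
  exact (Ideal.jacobson_bot (R := R) ▸ Ideal.isRadical_jacobson ⊥).isPrime_of_isUniformMod
    (hu.of_linearEquiv (Submodule.Quotient.equiv _ _ _ hrad))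

theorem Ideal.IsPrime.exists_mul_one_sub_mul_eq_zero {j p : R} (hP : (Ideal.span {j}).IsPrime)
    (hp : p ∉ Ideal.span {j}) (hpj : p ∣ j) : ∃ s, j * (1 - s * p) = 0 := by
  obtain ⟨a, rfl⟩ := hpj
  obtain ⟨s, hs⟩ := Ideal.mem_span_singleton'.mp
    ((hP.mem_or_mem (Ideal.mem_span_singleton_self _)).resolve_left hp)
  exact ⟨s, by linear_combination (-p) * hs⟩

theorem eq_zero_of_forall_isMaximal_exists_mul_eq_zero {x : R}
    (h : ∀ m : Ideal R, m.IsMaximal → ∃ r ∉ m, r * x = 0) : x = 0 := by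
  by_contra hx
  obtain ⟨m, hm, hle⟩ := Ideal.exists_le_maximal _ ((Ideal.torsionOf_eq_top_iff R x).not.mpr hx)
  obtain ⟨r, hr, hrx⟩ := h m hm
  exact hr (hle hrx)

theorem IsLocalRing.of_isPrime_jacobson [IsPrincipalIdealRing R]
    (hJ : (Ring.jacobson R).IsPrime) (hJ0 : Ring.jacobson R ≠ ⊥) : IsLocalRing R := by
  by_cases hloc : ∃ m : Ideal R, m.IsMaximal ∧ m ≤ Ring.jacobson R
  · obtain ⟨m, hm, hmJ⟩ := hloc
    refine .of_unique_max_ideal ⟨m, hm, fun m' hm' => ?_⟩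
    exact (hm.eq_of_le hm'.ne_top (hmJ.trans (Ring.jacobson_le_of_isMaximal m'))).symm
  obtain ⟨j, hj⟩ := IsPrincipalIdealRing.principal (Ring.jacobson R)
  refine absurd (hj.trans (Ideal.span_singleton_eq_bot.mpr
    (eq_zero_of_forall_isMaximal_exists_mul_eq_zero fun m hm => ?_))) hJ0
  obtain ⟨p, rfl⟩ := IsPrincipalIdealRing.principal m
  have hjp : p ∣ j := Ideal.mem_span_singleton.mp
    (Ring.jacobson_le_of_isMaximal _ (hj ▸ Ideal.mem_span_singleton_self j))
  have hp : p ∉ Ideal.span {j} := fun hp =>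
    hloc ⟨_, hm, hj ▸ (Ideal.span_singleton_le_iff_mem _).mpr hp⟩
  have hJ' : (Ideal.span {j}).IsPrime := by rwa [hj] at hJ
  obtain ⟨s, hs⟩ := hJ'.exists_mul_one_sub_mul_eq_zero hp hjp
  refine ⟨1 - s * p, fun hmem => hm.ne_top ((Ideal.eq_top_iff_one _).mpr ?_), by rw [mul_comm, hs]⟩
  simpa using add_mem hmem (Ideal.mul_mem_left _ s (Ideal.mem_span_singleton_self p))

namespace IsLocalRing

variable [IsNoetherianRing R] [IsLocalRing R]

theorem exists_eq_pow_mul_of_maximalIdeal_eq_span {p : R} (hp : maximalIdeal R = Ideal.span {p})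
    {x : R} (hx : x ≠ 0) : ∃ (n : ℕ) (u : R), IsUnit u ∧ x = p ^ n * u := by
  have hfin : FiniteMultiplicity p x := by
    have hx' : x ∉ ⨅ n, maximalIdeal R ^ n := by
      rwa [Ideal.iInf_pow_eq_bot_of_isLocalRing _ (maximalIdeal.isMaximal R).ne_top,
        Ideal.mem_bot]
    obtain ⟨n, hn⟩ := not_forall.mp (Submodule.mem_iInf _ |>.not.mp hx')
    rw [hp, Ideal.span_singleton_pow, Ideal.mem_span_singleton] at hn
    exact ⟨n, fun h => hn ((pow_dvd_pow p n.le_succ).trans h)⟩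
  obtain ⟨u, hxu, hpu⟩ := hfin.exists_eq_pow_mul_and_not_dvd
  refine ⟨_, u, ?_, hxu⟩
  rwa [← notMem_maximalIdeal, hp, Ideal.mem_span_singleton]

theorem preValuationRing_of_isPrincipal_maximalIdeal (h : (maximalIdeal R).IsPrincipal) :
    PreValuationRing R := by
  obtain ⟨p, hp⟩ := h
  refine PreValuationRing.iff_dvd_total.mpr ⟨fun a b => ?_⟩
  rcases eq_or_ne a 0 with rfl | ha
  · exact Or.inr (dvd_zero b)
  rcases eq_or_ne b 0 with rfl | hb
  · exact Or.inl (dvd_zero a)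
  obtain ⟨k, u, hu, rfl⟩ := exists_eq_pow_mul_of_maximalIdeal_eq_span hp ha
  obtain ⟨l, v, hv, rfl⟩ := exists_eq_pow_mul_of_maximalIdeal_eq_span hp hb
  rw [hu.mul_right_dvd, hv.mul_right_dvd]
  exact (le_total k l).imp (fun h => (pow_dvd_pow p h).mul_right _)
    (fun h => (pow_dvd_pow p h).mul_right _)

end IsLocalRing

end CommRing

theorem stmt13 {R : Type*} [CommRing R] [IsNoetherianRing R]
    (h : IsCUUniserial R R) :
    (∀ I J : Ideal R, I ≤ J ∨ J ≤ I) ∨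
    (IsDomain R ∧ IsPrincipalIdealRing R ∧ Ideal.jacobson (⊥ : Ideal R) = ⊥) := by
  have hPIR := h.isPrincipalIdealRing
  have hJ := h.isPrime_jacobson
  rw [Ideal.jacobson_bot]
  by_cases hJ0 : Ring.jacobson R = ⊥
  · rw [hJ0] at hJ
    exact Or.inr ⟨IsDomain.of_bot_isPrime R, hPIR, hJ0⟩
  · have := IsLocalRing.of_isPrime_jacobson hJ hJ0
    have hval := IsLocalRing.preValuationRing_of_isPrincipal_maximalIdeal
      (IsPrincipalIdealRing.principal (IsLocalRing.maximalIdeal R))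
    exact Or.inl (PreValuationRing.iff_ideal_total.mp hval).total
end

section
/- A commutative nonlocal Noetherian ring R is cu-uniserial if and only if R is a principal ideal domain with J(R) = 0. -/
namespace CUAux

open Submodule

variable {R : Type*} [CommRing R]

section Transfer

variable {M N : Type*} [AddCommGroup M] [Module R M] [AddCommGroup N] [Module R N]

lemma modRadical_map (e : M ≃ₗ[R] N) :
    (ModRadical R M).map (e : M →ₗ[R] N) = ModRadical R N := by
  have key : (orderIsoMapComap e) '' {P : Submodule R M | IsCoatom P}
      = {P : Submodule R N | IsCoatom P} := by
    ext P
    constructor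
    · rintro ⟨Q, hQ, rfl⟩
      exact ((orderIsoMapComap e).isCoatom_iff Q).mpr hQ
    · intro hP
      refine ⟨(orderIsoMapComap e).symm P, ?_, (orderIsoMapComap e).apply_symm_apply P⟩
      have h2 := (orderIsoMapComap e).isCoatom_iff ((orderIsoMapComap e).symm P)
      rw [(orderIsoMapComap e).apply_symm_apply] at h2
      exact h2.mp hP
  calc (ModRadical R M).map (e : M →ₗ[R] N)
      = (orderIsoMapComap e) (ModRadical R M) := rfl
    _ = ⨅ P ∈ {P : Submodule R M | IsCoatom P}, (orderIsoMapComap e) P :=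
        OrderIso.map_sInf _ _
    _ = sInf ((orderIsoMapComap e) '' {P : Submodule R M | IsCoatom P}) :=
        (sInf_image).symm
    _ = ModRadical R N := by rw [key]; rfl

lemma modRadical_ring : ModRadical R R = Ideal.jacobson (⊥ : Ideal R) := by
  have h : {N : Submodule R R | IsCoatom N} = {J : Ideal R | ⊥ ≤ J ∧ J.IsMaximal} := by
    ext I
    simp [Ideal.isMaximal_def]
  rw [ModRadical, h]
  rfl

lemma isCyclicMod_of_surjective (f : M →ₗ[R] N) (hf : Function.Surjective f)
    (h : IsCyclicMod R M) : IsCyclicMod R N := by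
  obtain ⟨x, hx⟩ := h
  refine ⟨f x, ?_⟩
  rw [← Set.image_singleton, ← Submodule.map_span, hx, Submodule.map_top,
    LinearMap.range_eq_top.mpr hf]

lemma isUniformMod_congr (e : M ≃ₗ[R] N) (h : IsUniformMod R M) : IsUniformMod R N := by
  obtain ⟨⟨x, y, hxy⟩, h⟩ := h
  set f : Submodule R M ≃o Submodule R N := orderIsoMapComap e with hf
  constructor
  · exact ⟨e x, e y, fun hc => hxy (e.injective hc)⟩
  · intro A B hA hB hAB
    have h1 : f.symm A ≠ ⊥ := by
      intro hc
      apply hA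
      have := congrArg f hc
      rwa [f.apply_symm_apply, f.map_bot] at this
    have h2 : f.symm B ≠ ⊥ := by
      intro hc
      apply hB
      have := congrArg f hc
      rwa [f.apply_symm_apply, f.map_bot] at this
    apply h _ _ h1 h2
    rw [← f.symm.map_inf, hAB, f.symm.map_bot]

end Transfer

section Noeth

variable {M : Type*} [AddCommGroup M] [Module R M]

lemma exists_coatom_ge [IsNoetherian R M] (N : Submodule R M) (hN : N ≠ ⊤) :
    ∃ C : Submodule R M, IsCoatom C ∧ N ≤ C := by
  obtain ⟨C, ⟨hNC, hC⟩, hmax⟩ := (set_has_maximal_iff_noetherian.mpr inferInstance)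
    {P : Submodule R M | N ≤ P ∧ P ≠ ⊤} ⟨N, le_rfl, hN⟩
  refine ⟨C, ⟨hC, fun P hCP => ?_⟩, hNC⟩
  by_contra hP
  exact hmax P ⟨hNC.trans hCP.le, hP⟩ hCP

lemma cyclic_of_quotient [IsNoetherian R M]
    (h : IsCyclicMod R (M ⧸ ModRadical R M)) : IsCyclicMod R M := by
  obtain ⟨xb, hx⟩ := h
  obtain ⟨x, rfl⟩ := Submodule.Quotient.mk_surjective _ xb
  refine ⟨x, ?_⟩
  by_contra hne
  obtain ⟨C, hC, hle⟩ := exists_coatom_ge _ hne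
  have hrad : ModRadical R M ≤ C := sInf_le hC
  have hall : ∀ y : M, y ∈ C := by
    intro y
    have h1 : (Submodule.Quotient.mk y : M ⧸ ModRadical R M)
        ∈ Submodule.span R {(Submodule.Quotient.mk x : M ⧸ ModRadical R M)} := by
      rw [hx]; trivial
    obtain ⟨r, hr⟩ := Submodule.mem_span_singleton.mp h1
    rw [← Submodule.Quotient.mk_smul, Submodule.Quotient.eq] at hr
    have h2 : r • x - y ∈ C := hrad hr
    have h3 : r • x ∈ C := C.smul_mem r (hle (Submodule.mem_span_singleton_self x))
    have h4 := C.sub_mem h3 h2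
    simpa using h4
  exact hC.1 (eq_top_iff.mpr fun y _ => hall y)

end Noeth

variable [IsNoetherianRing R]

lemma ideal_principal (H : IsCUUniserial R R) (K : Ideal R) (hK : K ≠ ⊥) :
    ∃ c : R, c ≠ 0 ∧ K = Ideal.span {c} := by
  obtain ⟨hcyc, -⟩ := H.2 K hK (IsNoetherian.noetherian K)
  obtain ⟨x, hx⟩ := cyclic_of_quotient hcyc
  have hKeq : K = Ideal.span {(x : R)} := by
    have h2 : Submodule.map K.subtype (Submodule.span R {x}) = K := by
      rw [hx, Submodule.map_subtype_top]
    calc K = Submodule.map K.subtype (Submodule.span R {x}) := h2.symm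
      _ = Submodule.span R (K.subtype '' {x}) := Submodule.map_span _ _
      _ = Ideal.span {(x : R)} := by rw [Set.image_singleton]; rfl
  refine ⟨x, fun hc => hK ?_, hKeq⟩
  rw [hKeq, hc, Ideal.span_singleton_eq_bot]

lemma jacobson_prime (H : IsCUUniserial R R) :
    (Ideal.jacobson (⊥ : Ideal R)).IsPrime := by
  haveI : Nontrivial R := H.1
  set J := Ideal.jacobson (⊥ : Ideal R) with hJdef
  have htop : (⊤ : Ideal R) ≠ ⊥ := by
    intro hc
    have h1 : (1 : R) ∈ (⊥ : Ideal R) := hc ▸ trivial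
    exact one_ne_zero (Ideal.mem_bot.mp h1)
  obtain ⟨-, huni⟩ := H.2 ⊤ htop (IsNoetherian.noetherian ⊤)
  have hmap : (ModRadical R ↥(⊤ : Ideal R)).map
      ((Submodule.topEquiv : ↥(⊤ : Ideal R) ≃ₗ[R] R) : ↥(⊤ : Ideal R) →ₗ[R] R)
      = (J : Submodule R R) := by
    rw [modRadical_map Submodule.topEquiv, modRadical_ring]
  have q : (↥(⊤ : Ideal R) ⧸ ModRadical R ↥(⊤ : Ideal R)) ≃ₗ[R] (R ⧸ (J : Submodule R R)) :=
    Submodule.Quotient.equiv _ _ Submodule.topEquiv hmap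
  have huni' : IsUniformMod R (R ⧸ (J : Submodule R R)) := isUniformMod_congr q huni
  have hJle : ∀ m : Ideal R, m.IsMaximal → J ≤ m := fun m hm => sInf_le ⟨bot_le, hm⟩
  constructor
  · obtain ⟨m, hm⟩ := Ideal.exists_maximal R
    intro hc
    exact hm.ne_top (top_le_iff.mp (hc ▸ hJle m hm))
  · intro x y hxy
    by_contra hcon
    push_neg at hcon
    obtain ⟨hx, hy⟩ := hcon
    have hmkx : (Submodule.Quotient.mk x : R ⧸ (J : Submodule R R)) ≠ 0 := by
      intro h
      exact hx (by rwa [Submodule.Quotient.mk_eq_zero] at h)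
    have hmky : (Submodule.Quotient.mk y : R ⧸ (J : Submodule R R)) ≠ 0 := by
      intro h
      exact hy (by rwa [Submodule.Quotient.mk_eq_zero] at h)
    have hA : Submodule.span R {(Submodule.Quotient.mk x : R ⧸ (J : Submodule R R))} ≠ ⊥ := by
      simpa [Submodule.span_singleton_eq_bot] using hmkx
    have hB : Submodule.span R {(Submodule.Quotient.mk y : R ⧸ (J : Submodule R R))} ≠ ⊥ := by
      simpa [Submodule.span_singleton_eq_bot] using hmky
    obtain ⟨z, hz, hz0⟩ := Submodule.exists_mem_ne_zero_of_ne_bot (huni'.2 _ _ hA hB)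
    obtain ⟨hzA, hzB⟩ := Submodule.mem_inf.mp hz
    obtain ⟨r, hr⟩ := Submodule.mem_span_singleton.mp hzA
    obtain ⟨s, hs⟩ := Submodule.mem_span_singleton.mp hzB
    rw [← Submodule.Quotient.mk_smul] at hr hs
    have hsub : r • x - s • y ∈ (J : Submodule R R) := by
      rw [← Submodule.Quotient.eq, hr, hs]
    have hw2 : (r * x) * (r * x) ∈ J := by
      have h1 : (r * x) * (s * y) ∈ J := by
        have : (r * x) * (s * y) = (r * s) * (x * y) := by ring
        rw [this]
        exact J.mul_mem_left _ hxy
      have h2 : (r * x) * ((r * x) - (s * y)) ∈ J := by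
        apply J.mul_mem_left
        simpa [smul_eq_mul] using hsub
      have h3 : (r * x) * (r * x) = (r * x) * (s * y) + (r * x) * ((r * x) - (s * y)) := by
        ring
      rw [h3]
      exact J.add_mem h1 h2
    have hw : r * x ∈ J := by
      rw [hJdef, Ideal.jacobson, Ideal.mem_sInf]
      rintro m ⟨-, hm⟩
      have hmm : (r * x) * (r * x) ∈ m := hJle m hm hw2
      rcases hm.isPrime.mem_or_mem hmm with h | h
      · exact h
      · exact h
    apply hz0
    rw [← hr, Submodule.Quotient.mk_eq_zero]
    simpa [smul_eq_mul] using hw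

lemma jacobson_eq_bot (hnl : ¬ IsLocalRing R) (H : IsCUUniserial R R) :
    Ideal.jacobson (⊥ : Ideal R) = ⊥ := by
  haveI : Nontrivial R := H.1
  by_contra hJ
  set J := Ideal.jacobson (⊥ : Ideal R) with hJdef
  have hJp : J.IsPrime := jacobson_prime H
  have hJle : ∀ m : Ideal R, m.IsMaximal → J ≤ m := fun m hm => sInf_le ⟨bot_le, hm⟩
  obtain ⟨a, ha0, haJ⟩ := ideal_principal H J hJ
  have haJ' : a ∈ J := haJ ▸ Ideal.mem_span_singleton_self a
  -- two distinct maximal ideals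
  have hex2 : ∃ m1 m2 : Ideal R, m1.IsMaximal ∧ m2.IsMaximal ∧ m1 ≠ m2 := by
    by_contra hc
    push_neg at hc
    obtain ⟨m, hm⟩ := Ideal.exists_maximal R
    exact hnl (IsLocalRing.of_unique_max_ideal ⟨m, hm, fun m' hm' => hc m' m hm' hm⟩)
  -- infinitely many maximal ideals
  have hinf : {m : Ideal R | m.IsMaximal}.Infinite := by
    rw [Set.infinite_coe_iff.symm] ; rw [Set.infinite_coe_iff]
    intro hfin
    obtain ⟨m1, m2, hm1, hm2, hne⟩ := hex2
    have hprod : (∏ m ∈ hfin.toFinset, m) ≤ J := by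
      rw [hJdef, Ideal.jacobson]
      refine le_sInf ?_
      rintro I ⟨-, hI⟩
      exact le_trans Ideal.prod_le_inf (Finset.inf_le (hfin.mem_toFinset.mpr hI))
    obtain ⟨m, hmS, hmJ⟩ := hJp.prod_le.mp hprod
    have hmmax : m.IsMaximal := hfin.mem_toFinset.mp hmS
    have hgoal : ∀ m' : Ideal R, m'.IsMaximal → m' ≠ m → False := by
      intro m' hm' hnem
      have : m = m' := hmmax.eq_of_le hm'.ne_top (hmJ.trans (hJle m' hm'))
      exact hnem this.symm
    by_cases h12 : m1 = m
    · exact hgoal m2 hm2 (fun hc => hne (h12.trans hc.symm))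
    · exact hgoal m1 hm1 h12
  -- key step: for every maximal ideal, the annihilator of a escapes it
  have key : ∀ m1 : Ideal R, m1.IsMaximal → ∃ v : R, v * a = 0 ∧ v ∉ m1 := by
    intro m1 hm1
    have hm1b : m1 ≠ ⊥ := by
      intro hc
      apply ha0
      have h1 : a ∈ m1 := hJle m1 hm1 haJ'
      rw [hc] at h1
      exact Ideal.mem_bot.mp h1
    obtain ⟨p1, hp10, hp1⟩ := ideal_principal H m1 hm1b
    set T : Set (Ideal R) := {I | ∃ c : R, I = Ideal.span {c} ∧ c ≠ 0 ∧
      (∃ s ∈ m1, a = c * s) ∧ {m : Ideal R | m.IsMaximal ∧ c ∉ m}.Finite} with hT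
    have hTne : T.Nonempty := by
      have haM : a ∈ m1 := hJle m1 hm1 haJ'
      rw [hp1, Ideal.mem_span_singleton'] at haM
      obtain ⟨c1, hc1⟩ := haM
      refine ⟨Ideal.span {c1}, c1, rfl, ?_, ⟨p1, ?_, hc1.symm⟩, ?_⟩
      · rintro rfl
        apply ha0
        rw [← hc1, zero_mul]
      · rw [hp1]
        exact Ideal.mem_span_singleton_self p1
      · apply Set.Finite.subset (Set.finite_singleton m1)
        rintro m ⟨hm, hc1m⟩
        by_contra hmm1
        have haM2 : c1 * p1 ∈ m := hc1.symm ▸ hJle m hm haJ'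
        rcases hm.isPrime.mem_or_mem haM2 with h | h
        · exact hc1m h
        · have hle : m1 ≤ m := by
            rw [hp1]
            exact Ideal.span_le.mpr (Set.singleton_subset_iff.mpr h)
          exact hmm1 (hm1.eq_of_le hm.ne_top hle).symm
    obtain ⟨I0, hI0T, hI0max⟩ :=
      (set_has_maximal_iff_noetherian.mpr inferInstance) T hTne
    obtain ⟨c, hI0c, hc0, ⟨s, hs, has⟩, hFfin⟩ := hI0T
    -- a fresh maximal ideal
    have hbig : ({m : Ideal R | m.IsMaximal ∧ c ∉ m} ∪ {m1}).Finite :=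
      hFfin.union (Set.finite_singleton m1)
    obtain ⟨m', hm'd⟩ := (hinf.diff hbig).nonempty
    obtain ⟨hm'max, hm'notin⟩ := hm'd
    have hcm' : c ∈ m' := by
      by_contra hcc
      exact hm'notin (Set.mem_union_left _ ⟨hm'max, hcc⟩)
    have hm'ne1 : m' ≠ m1 := by
      intro hc
      exact hm'notin (Set.mem_union_right _ (by rw [hc]; rfl))
    have hm'b : m' ≠ ⊥ := by
      intro hc
      apply ha0
      have h1 : a ∈ m' := hJle m' hm'max haJ'
      rw [hc] at h1
      exact Ideal.mem_bot.mp h1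
    obtain ⟨p', hp'0, hp'⟩ := ideal_principal H m' hm'b
    rw [hp', Ideal.mem_span_singleton'] at hcm'
    obtain ⟨c', hc'⟩ := hcm'
    have hc'0 : c' ≠ 0 := by
      rintro rfl
      apply hc0
      rw [← hc', zero_mul]
    have hT' : Ideal.span {c'} ∈ T := by
      refine ⟨c', rfl, hc'0, ⟨p' * s, m1.mul_mem_left p' hs, by rw [← hc'] at has; rw [has]; ring⟩, ?_⟩
      apply Set.Finite.subset (hFfin.union (Set.finite_singleton m'))
      rintro m ⟨hm, hc'm⟩
      by_cases hcmem : c ∈ m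
      · right
        rw [← hc'] at hcmem
        rcases hm.isPrime.mem_or_mem hcmem with h | h
        · exact absurd h hc'm
        · have hle : m' ≤ m := by
            rw [hp']
            exact Ideal.span_le.mpr (Set.singleton_subset_iff.mpr h)
          exact (hm'max.eq_of_le hm.ne_top hle).symm
      · exact Or.inl ⟨hm, hcmem⟩
    have hle : I0 ≤ Ideal.span {c'} := by
      rw [hI0c, Ideal.span_le, Set.singleton_subset_iff]
      exact Ideal.mem_span_singleton'.mpr ⟨p', by rw [mul_comm]; exact hc'⟩
    have heq : I0 = Ideal.span {c'} := by
      by_contra hne'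
      exact hI0max _ hT' (lt_of_le_of_ne hle hne')
    have hc'I0 : c' ∈ Ideal.span {c} := by
      rw [← hI0c, heq]
      exact Ideal.mem_span_singleton_self c'
    obtain ⟨w, hw⟩ := Ideal.mem_span_singleton'.mp hc'I0
    have hu : c' * (1 - w * p') = 0 := by
      linear_combination (-1 : R) * hw - w * hc'
    have h0J : c' * (1 - w * p') ∈ J := by
      rw [hu]; exact J.zero_mem
    rcases hJp.mem_or_mem h0J with hcJ | huJ
    · -- c' ∈ J
      rw [haJ] at hcJ
      obtain ⟨d, hd⟩ := Ideal.mem_span_singleton'.mp hcJ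
      refine ⟨1 - d * (p' * s), ?_, ?_⟩
      · linear_combination has - s * hc' - p' * s * hd
      · intro hmem
        have h1 : d * (p' * s) ∈ m1 :=
          m1.mul_mem_left d (m1.mul_mem_left p' hs)
        have h2 : (1 : R) ∈ m1 := by
          have := m1.add_mem hmem h1
          simpa using this
        exact hm1.ne_top ((Ideal.eq_top_iff_one m1).mpr h2)
    · -- 1 - w * p' ∈ J ≤ m' : contradiction
      exfalso
      have hwp' : w * p' ∈ m' := by
        rw [hp']
        exact Ideal.mul_mem_left _ w (Ideal.mem_span_singleton_self p')
      have h2 : (1 : R) ∈ m' := by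
        have := m'.add_mem (hJle m' hm'max huJ) hwp'
        simpa using this
      exact hm'max.ne_top ((Ideal.eq_top_iff_one m').mpr h2)
  -- conclude a = 0
  apply ha0
  have hann : Ideal.torsionOf R R a = ⊤ := by
    by_contra hne
    obtain ⟨m, hm, hle⟩ := Ideal.exists_le_maximal _ hne
    obtain ⟨v, hv0, hvm⟩ := key m hm
    exact hvm (hle (by simpa [Ideal.mem_torsionOf_iff, smul_eq_mul] using hv0))
  have h1 : (1 : R) ∈ Ideal.torsionOf R R a := hann ▸ trivial
  simpa [Ideal.mem_torsionOf_iff] using h1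

end CUAux

theorem stmt14 {R : Type*} [CommRing R] [IsNoetherianRing R]
    (hnl : ¬ IsLocalRing R) :
    IsCUUniserial R R ↔
      (IsDomain R ∧ IsPrincipalIdealRing R ∧ Ideal.jacobson (⊥ : Ideal R) = ⊥) := by
  constructor
  · intro H
    haveI : Nontrivial R := H.1
    have hJ : Ideal.jacobson (⊥ : Ideal R) = ⊥ := CUAux.jacobson_eq_bot hnl H
    have hJp := CUAux.jacobson_prime H
    rw [hJ] at hJp
    haveI : NoZeroDivisors R := by
      constructor
      intro x y hxy
      have hmem : x * y ∈ (⊥ : Ideal R) := Ideal.mem_bot.mpr hxy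
      rcases hJp.mem_or_mem hmem with h | h
      · exact Or.inl (Ideal.mem_bot.mp h)
      · exact Or.inr (Ideal.mem_bot.mp h)
    haveI hdom : IsDomain R := NoZeroDivisors.to_isDomain R
    refine ⟨hdom, ⟨fun K => ?_⟩, hJ⟩
    by_cases hK : K = ⊥
    · exact ⟨0, by rw [hK, Set.singleton_zero, Submodule.span_zero]⟩
    · obtain ⟨c, -, hc⟩ := CUAux.ideal_principal H K hK
      exact ⟨c, hc⟩
  · rintro ⟨hdom, hpir, hJ⟩
    refine ⟨inferInstance, ?_⟩
    intro K hK hKfg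
    obtain ⟨c, hc⟩ := (hpir.principal K).principal
    have hc0 : c ≠ 0 := by
      rintro rfl
      exact hK (by rw [hc]; simp)
    have hmemc : c ∈ K := hc ▸ Submodule.mem_span_singleton_self c
    let f : R →ₗ[R] ↥K := LinearMap.toSpanSingleton R ↥K ⟨c, hmemc⟩
    have hbij : Function.Bijective f := by
      constructor
      · intro x y hxy
        have h1 : x * c = y * c := by
          have := congrArg Subtype.val hxy
          simpa [f, LinearMap.toSpanSingleton, smul_eq_mul] using this
        exact mul_right_cancel₀ hc0 h1
      · rintro ⟨x, hx⟩
        rw [hc] at hx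
        obtain ⟨r, hr⟩ := Submodule.mem_span_singleton.mp hx
        refine ⟨r, Subtype.ext ?_⟩
        simpa [f, LinearMap.toSpanSingleton, smul_eq_mul] using hr
    let e : R ≃ₗ[R] ↥K := LinearEquiv.ofBijective f hbij
    have hrad : ModRadical R ↥K = ⊥ := by
      rw [← CUAux.modRadical_map e, CUAux.modRadical_ring, hJ, Submodule.map_bot]
    let q : (↥K ⧸ ModRadical R ↥K) ≃ₗ[R] R :=
      (Submodule.quotEquivOfEqBot _ hrad).trans e.symm
    have hRcyc : IsCyclicMod R R := by
      refine ⟨1, ?_⟩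
      have : Ideal.span ({1} : Set R) = ⊤ := Ideal.span_singleton_one
      exact this
    have hRuni : IsUniformMod R R := by
      refine ⟨inferInstance, ?_⟩
      intro A B hA hB hAB
      obtain ⟨x, hxA, hx0⟩ := Submodule.exists_mem_ne_zero_of_ne_bot hA
      obtain ⟨y, hyB, hy0⟩ := Submodule.exists_mem_ne_zero_of_ne_bot hB
      have hmem : x * y ∈ A ⊓ B := by
        refine Submodule.mem_inf.mpr ⟨?_, ?_⟩
        · have := A.smul_mem y hxA
          simpa [smul_eq_mul, mul_comm] using this
        · have := B.smul_mem x hyB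
          simpa [smul_eq_mul] using this
      rw [hAB] at hmem
      exact mul_ne_zero hx0 hy0 (by simpa using hmem)
    exact ⟨CUAux.isCyclicMod_of_surjective (q.symm : R →ₗ[R] _) q.symm.surjective hRcyc,
      CUAux.isUniformMod_congr q.symm hRuni⟩
end

section
/- If R is a ring whose every finitely generated left R-module is cu-serial, then R is a left FGC ring (every finitely generated left R-module is a direct sum of cyclic modules) and R has finite uniform dimension as a left module over itself. -/
/-!
Every finitely generated module `M` is an internal direct sum of cu-uniserial submodules. There are
finitely many of them because `⊤` is compact, each is a direct summand, hence finitely generated,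
and a finitely generated module `N` with `N / Rad N` cyclic is cyclic by Nakayama.

A cu-uniserial module is uniform: disjoint nonzero `Ra` and `Rb` would make `(Ra ⊕ Rb) / Rad` a
direct sum of two nonzero modules, since the radical is stable under the projection onto `Ra`.
Hence `R` is a finite direct sum of uniform left ideals, and a Steinitz-type exchange in the
modular lattice of left ideals bounds the length of any independent family of nonzero left ideals
by the number of those summands.
-/

def IsUniform {α : Type*} [CompleteLattice α] (u : α) : Prop :=
  ∀ a ≤ u, ∀ b ≤ u, a ≠ ⊥ → b ≠ ⊥ → a ⊓ b ≠ ⊥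

section Lattice

variable {α : Type*} [CompleteLattice α]

theorem iSupIndep.finite_of_isCompactElement_top {ι : Type*} {t : ι → α} (ht : iSupIndep t)
    (hne : ∀ i, t i ≠ ⊥) (htop : ⨆ i, t i = ⊤) (hc : IsCompactElement (⊤ : α)) :
    Finite ι := by
  obtain ⟨s, hs⟩ := CompleteLattice.IsCompactElement.exists_finset_of_le_iSup α hc t htop.ge
  have hmem : ∀ i, i ∈ (s : Set ι) :=
    fun i => ht.mem_of_biSup_eq_top (by simpa using top_le_iff.mp hs) (hne i)
  exact Set.finite_univ_iff.mp (s.finite_toSet.subset fun i _ => hmem i)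

theorem Fin.iSup_succAbove {n : ℕ} (f : Fin (n + 1) → α) (j : Fin (n + 1)) :
    ⨆ k, f (j.succAbove k) = ⨆ (i) (_ : i ≠ j), f i := by
  rw [← iSup_range (g := f), Fin.range_succAbove]
  simp only [Set.mem_compl_iff, Set.mem_singleton_iff]

variable [IsModularLattice α]

theorem iSupIndep.sup_iSup_inf_sup_iSup_ne_le {ι : Type*} {X : α} {V : ι → α}
    (hV : iSupIndep V) (hXV : Disjoint X (⨆ i, V i)) (p : ι → Prop) (j : ι) :
    (X ⊔ ⨆ (i) (_ : p i), V i) ⊓ (X ⊔ ⨆ (i) (_ : i ≠ j), V i) ≤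
      X ⊔ ⨆ (i) (_ : i ≠ j ∧ p i), V i := by
  set A := X ⊔ ⨆ (i) (_ : i ≠ j ∧ p i), V i
  have hVj : Disjoint (V j) (X ⊔ ⨆ (i) (_ : i ≠ j), V i) := by
    rw [sup_comm]
    exact (hV j).disjoint_sup_right_of_disjoint_sup_left
      (by rw [← iSup_split_single]; exact hXV.symm)
  have hA : A ≤ X ⊔ ⨆ (i) (_ : i ≠ j), V i :=
    sup_le_sup_left (iSup₂_le fun i hi => le_iSup₂ (f := fun i (_ : i ≠ j) => V i) i hi.1) X
  have hle : X ⊔ ⨆ (i) (_ : p i), V i ≤ A ⊔ V j := by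
    refine sup_le (le_sup_of_le_left le_sup_left) (iSup₂_le fun i hi => ?_)
    by_cases hij : i = j
    · exact hij ▸ le_sup_right
    · exact le_sup_of_le_left (le_sup_of_le_right
        (le_iSup₂ (f := fun i (_ : i ≠ j ∧ p i) => V i) i ⟨hij, hi⟩))
  calc _ ≤ (A ⊔ V j) ⊓ (X ⊔ ⨆ (i) (_ : i ≠ j), V i) := inf_le_inf_right _ hle
    _ = A := by rw [sup_inf_assoc_of_le _ hA, hVj.eq_bot, sup_bot_eq]

theorem IsUniform.exists_disjoint_sup_iSup_ne {u X : α} (hu : IsUniform u) (hXu : Disjoint X u)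
    {ι : Type*} [Finite ι] [Nonempty ι] {V : ι → α} (hV : iSupIndep V)
    (hXV : Disjoint X (⨆ i, V i)) : ∃ j, Disjoint u (X ⊔ ⨆ (i) (_ : i ≠ j), V i) := by
  classical
  have := Fintype.ofFinite ι
  -- Otherwise `u` meets every `X ⊔ ⨆ (i ≠ j), V i`, hence, being uniform, their meet `X`.
  by_contra! h
  suffices key : ∀ s : Finset ι, ¬Disjoint u (X ⊔ ⨆ (i) (_ : i ∉ s), V i) by
    simpa [hXu.symm] using key Finset.univ
  intro s
  induction s using Finset.induction_on with
  | empty =>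
    obtain ⟨j⟩ := ‹Nonempty ι›
    refine fun hd => h j (hd.mono_right (sup_le_sup_left (iSup₂_le fun i _ => ?_) X))
    simpa using le_iSup V i
  | insert j s _ ih =>
    have hmeet := hu _ inf_le_left _ inf_le_left (fun hb => ih (disjoint_iff.mpr hb))
      (fun hb => h j (disjoint_iff.mpr hb))
    have hle := hV.sup_iSup_inf_sup_iSup_ne_le hXV (· ∉ s) j
    simp only [← not_or, ← Finset.mem_insert] at hle
    refine fun hd => hmeet (le_bot_iff.mp ?_)
    calc _ ≤ u ⊓ (X ⊔ ⨆ (i) (_ : i ∉ insert j s), V i) :=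
          le_inf (inf_le_left.trans inf_le_left) ((inf_le_inf inf_le_right inf_le_right).trans hle)
      _ = ⊥ := hd.eq_bot

/-- `X` holds the uniform summands already exchanged for members of `V`; this lets the induction
run inside one lattice. -/
theorem exists_eq_bot_of_le_sup_iSup_isUniform {n : ℕ} {X : α} {U : Fin n → α}
    {V : Fin (n + 1) → α} (hU : iSupIndep U) (hUu : ∀ i, IsUniform (U i))
    (hXU : Disjoint X (⨆ i, U i)) (hV : iSupIndep V) (hXV : Disjoint X (⨆ i, V i))
    (hVle : ⨆ i, V i ≤ X ⊔ ⨆ i, U i) : ∃ j, V j = ⊥ := by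
  induction n generalizing X with
  | zero =>
    rw [iSup_of_empty U, sup_bot_eq] at hVle
    exact ⟨0, le_bot_iff.mp ((le_iSup V 0).trans (hXV.eq_bot_of_ge hVle).le)⟩
  | succ m ih =>
    set S := ⨆ k : Fin m, U k.succ
    have hS : S = ⨆ (i) (_ : i ≠ 0), U i := by simpa using Fin.iSup_succAbove U 0
    have hsplit : ⨆ i, U i = U 0 ⊔ S := hS ▸ iSup_split_single U 0
    obtain ⟨j, hj⟩ := (hUu 0).exists_disjoint_sup_iSup_ne (hXU.mono_right (le_iSup U 0)) hV hXV
    rw [← Fin.iSup_succAbove] at hj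
    have hW : ⨆ k, V (j.succAbove k) ≤ ⨆ i, V i := iSup_le fun k => le_iSup V _
    obtain ⟨k, hk⟩ := ih (X := X ⊔ U 0) (U := fun k => U k.succ)
      (V := fun k => V (j.succAbove k))
      (hU.comp (Fin.succ_injective _)) (fun k => hUu k.succ)
      ((hS ▸ hU 0 : Disjoint (U 0) S).disjoint_sup_left_of_disjoint_sup_right (hsplit ▸ hXU))
      (hV.comp Fin.succAbove_right_injective)
      (sup_comm (U 0) X ▸ (hXV.mono_right hW).disjoint_sup_left_of_disjoint_sup_right hj)
      (hW.trans (hVle.trans (by rw [hsplit, sup_assoc])))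
    exact ⟨j.succAbove k, hk⟩

theorem iSupIndep.exists_eq_bot_of_isUniform {ι : Type*} [Finite ι] {U : ι → α}
    (hU : iSupIndep U) (hUu : ∀ i, IsUniform (U i)) (htop : ⨆ i, U i = ⊤) {V : ℕ → α}
    (hV : iSupIndep V) : ∃ n, V n = ⊥ := by
  obtain ⟨n, ⟨e⟩⟩ := Finite.exists_equiv_fin ι
  obtain ⟨j, hj⟩ := exists_eq_bot_of_le_sup_iSup_isUniform (X := ⊥)
    (U := fun i => U (e.symm i))
    (V := fun j : Fin (n + 1) => V j) (hU.comp e.symm.injective) (fun i => hUu _)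
    disjoint_bot_left (hV.comp Fin.val_injective) disjoint_bot_left
    (by rw [bot_sup_eq, e.symm.surjective.iSup_comp U, htop]; exact le_top)
  exact ⟨j, hj⟩

end Lattice

section Modules

variable {R M : Type*} [Ring R] [AddCommGroup M] [Module R M]

theorem Submodule.comap_subtype_ne_bot {K P : Submodule R M} (hPK : P ≤ K) (hP : P ≠ ⊥) :
    comap K.subtype P ≠ ⊥ := fun h => hP <| by
  rw [← inf_eq_right.mpr hPK, ← map_comap_subtype, h, map_bot]

theorem Submodule.isCompl_comap_subtype_sup {A B : Submodule R M} (h : Disjoint A B) :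
    IsCompl (comap (A ⊔ B).subtype A) (comap (A ⊔ B).subtype B) := by
  constructor
  · rw [disjoint_iff, ← comap_inf, h.eq_bot, comap_bot, ker_subtype]
  · rw [codisjoint_iff]
    apply map_injective_of_injective (A ⊔ B).injective_subtype
    rw [map_sup, map_comap_subtype, map_comap_subtype, map_subtype_top,
      inf_eq_right.mpr le_sup_left, inf_eq_right.mpr le_sup_right]

theorem IsCyclicMod.exists_eq_span_singleton {K : Submodule R M} (h : IsCyclicMod R K) :
    ∃ x : M, K = Submodule.span R {x} := by
  obtain ⟨y, hy⟩ := h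
  refine ⟨y, ?_⟩
  simpa [Submodule.map_span] using (congrArg (Submodule.map K.subtype) hy).symm

theorem eq_top_of_sup_modRadical_eq_top [Module.Finite R M] {X : Submodule R M}
    (h : X ⊔ ModRadical R M = ⊤) : X = ⊤ := by
  by_contra hX
  obtain ⟨m, hm, hXm⟩ := (eq_top_or_exists_le_coatom X).resolve_left hX
  exact hm.1 (top_le_iff.mp (h ▸ sup_le hXm (sInf_le hm)))

theorem IsCyclicMod.of_quotient_modRadical [Module.Finite R M]
    (h : IsCyclicMod R (M ⧸ ModRadical R M)) : IsCyclicMod R M := by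
  obtain ⟨x, hx⟩ := h
  obtain ⟨x, rfl⟩ := Submodule.mkQ_surjective _ x
  refine ⟨x, eq_top_of_sup_modRadical_eq_top ?_⟩
  rwa [sup_comm, ← Submodule.map_mkQ_eq_top, Submodule.map_span, Set.image_singleton]

theorem map_mkQ_modRadical_ne_bot [Module.Finite R M] {A B : Submodule R M} (hAB : IsCompl A B)
    (hA : A ≠ ⊥) : A.map (ModRadical R M).mkQ ≠ ⊥ := by
  intro h
  have hArad : A ≤ ModRadical R M := by
    rwa [← LinearMap.le_ker_iff_map, Submodule.ker_mkQ] at h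
  have hB : B = ⊤ := by
    refine eq_top_of_sup_modRadical_eq_top (top_le_iff.mp ?_)
    rw [← hAB.sup_eq_top, sup_comm A B]
    exact sup_le_sup_left hArad B
  exact hA (by simpa [hB] using hAB.inf_eq_bot)

theorem disjoint_map_mkQ_modRadical {A B : Submodule R M} (hAB : IsCompl A B) :
    Disjoint (A.map (ModRadical R M).mkQ) (B.map (ModRadical R M).mkQ) := by
  rw [Submodule.disjoint_def]
  rintro _ ⟨a, ha, rfl⟩ ⟨b, hb, hba⟩
  have hrad : a - b ∈ ModRadical R M := by
    rw [← Submodule.Quotient.eq]; exact hba.symm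
  -- `ModRadical R M` is `Module.jacobson R M` by definition, so it is stable under endomorphisms.
  have : A.projection B hAB (a - b) ∈ ModRadical R M :=
    Module.map_jacobson_le _ (Submodule.mem_map_of_mem hrad)
  rw [map_sub, Submodule.projection_apply_of_mem_left hAB ha,
    Submodule.projection_apply_of_mem_right hAB hb, sub_zero] at this
  exact (Submodule.Quotient.mk_eq_zero _).mpr this

theorem not_isUniformMod_quotient_modRadical [Module.Finite R M] {A B : Submodule R M}
    (hAB : IsCompl A B) (hA : A ≠ ⊥) (hB : B ≠ ⊥) :
    ¬IsUniformMod R (M ⧸ ModRadical R M) :=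
  fun h => h.2 _ _ (map_mkQ_modRadical_ne_bot hAB hA) (map_mkQ_modRadical_ne_bot hAB.symm hB)
    (disjoint_map_mkQ_modRadical hAB).eq_bot

theorem IsCUUniserial.isCyclicMod [Module.Finite R M] (h : IsCUUniserial R M) :
    IsCyclicMod R M := by
  have := h.1
  obtain ⟨x, hx⟩ := (IsCyclicMod.of_quotient_modRadical
    (h.2 ⊤ top_ne_bot Module.Finite.fg_top).1).exists_eq_span_singleton
  exact ⟨x, hx.symm⟩

theorem IsCUUniserial.isUniformMod (h : IsCUUniserial R M) : IsUniformMod R M := by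
  refine ⟨h.1, fun A B hA hB hAB => ?_⟩
  obtain ⟨a, haA, ha⟩ := A.ne_bot_iff.mp hA
  obtain ⟨b, hbB, hb⟩ := B.ne_bot_iff.mp hB
  set P := Submodule.span R {a}
  set Q := Submodule.span R {b}
  have hPQ : Disjoint P Q := (disjoint_iff.mpr hAB).mono
    (Submodule.span_le.mpr (by simpa using haA)) (Submodule.span_le.mpr (by simpa using hbB))
  have hP : P ≠ ⊥ := by simpa [P] using ha
  have hQ : Q ≠ ⊥ := by simpa [Q] using hb
  have hfg : (P ⊔ Q).FG := (Submodule.fg_span_singleton a).sup (Submodule.fg_span_singleton b)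
  have := Module.Finite.iff_fg.mpr hfg
  exact not_isUniformMod_quotient_modRadical (Submodule.isCompl_comap_subtype_sup hPQ)
    (Submodule.comap_subtype_ne_bot le_sup_left hP) (Submodule.comap_subtype_ne_bot le_sup_right hQ)
    (h.2 (P ⊔ Q) (ne_bot_of_le_ne_bot hP le_sup_left) hfg).2

theorem IsCUUniserial.ne_bot {N : Submodule R M} (h : IsCUUniserial R N) : N ≠ ⊥ :=
  Submodule.nontrivial_iff_ne_bot.mp h.1

theorem IsUniformMod.isUniform {N : Submodule R M} (h : IsUniformMod R N) : IsUniform N := by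
  intro A hA B hB hA0 hB0 hAB
  apply h.2 _ _ (Submodule.comap_subtype_ne_bot hA hA0) (Submodule.comap_subtype_ne_bot hB hB0)
  rw [← Submodule.comap_inf, hAB, Submodule.comap_bot, Submodule.ker_subtype]

namespace DirectSum.IsInternal

variable {ι : Type*} [DecidableEq ι] {N : ι → Submodule R M} [Module.Finite R M]

theorem finite_of_ne_bot (h : IsInternal N) (hne : ∀ i, N i ≠ ⊥) : Finite ι :=
  h.submodule_iSupIndep.finite_of_isCompactElement_top hne h.submodule_iSup_eq_top
    ((Submodule.fg_iff_compact ⊤).mp Module.Finite.fg_top)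

theorem moduleFinite (h : IsInternal N) (i : ι) : Module.Finite R (N i) :=
  have hc : IsCompl (N i) (⨆ (j) (_ : j ≠ i), N j) := ⟨h.submodule_iSupIndep i,
    codisjoint_iff.mpr (by rw [← iSup_split_single, h.submodule_iSup_eq_top])⟩
  Module.Finite.of_surjective _ (Submodule.projectionOnto_surjective hc)

end DirectSum.IsInternal

end Modules

theorem stmt17 {R : Type} [Ring R]
    (h : ∀ (M : Type) [AddCommGroup M] [Module R M], Module.Finite R M →
      ∃ (ι : Type) (_ : DecidableEq ι) (N : ι → Submodule R M), DirectSum.IsInternal N ∧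
        ∀ i, IsCUUniserial R (N i)) :
    (∀ (M : Type) [AddCommGroup M] [Module R M], Module.Finite R M →
      ∃ (ι : Type) (_ : DecidableEq ι) (N : ι → Submodule R M), Finite ι ∧ DirectSum.IsInternal N ∧
        ∀ i, ∃ x : M, N i = Submodule.span R {x}) ∧
    ¬ ∃ f : ℕ → Ideal R, (∀ n, f n ≠ ⊥) ∧ iSupIndep f := by
  constructor
  · intro M _ _ hM
    obtain ⟨ι, _, N, hN, hcu⟩ := h M hM
    refine ⟨ι, _, N, hN.finite_of_ne_bot fun i => (hcu i).ne_bot, hN, fun i => ?_⟩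
    have := hN.moduleFinite i
    exact (hcu i).isCyclicMod.exists_eq_span_singleton
  · rintro ⟨f, hf, hfind⟩
    obtain ⟨ι, _, N, hN, hcu⟩ := h R inferInstance
    have := hN.finite_of_ne_bot fun i => (hcu i).ne_bot
    obtain ⟨n, hn⟩ := hN.submodule_iSupIndep.exists_eq_bot_of_isUniform
      (fun i => (hcu i).isUniformMod.isUniform) hN.submodule_iSup_eq_top hfind
    exact hf n hn
end

section
/- Over a ring R that is a finite direct product of local rings, every cu-uniserial left R-module is uniserial. -/
/-!
A uniform module `Q` over `Π i, S i` is fixed by one of the central idempotents `Pi.single i 1`: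
a central idempotent `e` splits `Q` as `e • Q ⊕ (1 - e) • Q` and uniformity kills one summand, so
`Q` is in effect a module over the local ring `S i`. If `Q` is also cyclic, generated by `q`, the
multiples `r • q` with `r i` in the maximal ideal form its largest proper submodule. Apply this to
`K ⧸ Rad K` for `K = R x + R y`. As `K` is finitely generated, `Rad K` is superfluous in `K`, so
`K` itself has a largest proper submodule and is therefore generated by `x` or by `y`. Hence any
two cyclic submodules are comparable, and then so are any two submodules.
-/

open Submodule

def IsLocalModule (R M : Type*) [Ring R] [AddCommGroup M] [Module R M] : Prop :=
  ∃ C : Submodule R M, C ≠ ⊤ ∧ ∀ N : Submodule R M, N ≠ ⊤ → N ≤ C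

section Module

variable {R M : Type*} [Ring R] [AddCommGroup M] [Module R M]

theorem le_or_le_of_span_singleton_le_or_le
    (h : ∀ x y : M, R ∙ x ≤ R ∙ y ∨ R ∙ y ≤ R ∙ x) (A B : Submodule R M) : A ≤ B ∨ B ≤ A := by
  by_contra! hAB
  obtain ⟨a, haA, haB⟩ := SetLike.not_le_iff_exists.mp hAB.1
  obtain ⟨b, hbB, hbA⟩ := SetLike.not_le_iff_exists.mp hAB.2
  rcases h a b with hab | hba
  · exact haB ((span_singleton_le_iff_mem a B).mp
      (hab.trans ((span_singleton_le_iff_mem b B).mpr hbB)))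
  · exact hbA ((span_singleton_le_iff_mem b A).mp
      (hba.trans ((span_singleton_le_iff_mem a A).mpr haA)))

theorem IsLocalModule.span_singleton_eq_top_or_eq_top (hM : IsLocalModule R M) {x y : M}
    (hxy : span R {x, y} = ⊤) : R ∙ x = ⊤ ∨ R ∙ y = ⊤ := by
  obtain ⟨C, hC, hle⟩ := hM
  by_contra! h
  apply hC
  rw [eq_top_iff, ← hxy, span_insert]
  exact sup_le (hle _ h.1) (hle _ h.2)

theorem mem_span_singleton_of_span_singleton_eq_top {K : Submodule R M} {u : K}
    (hu : R ∙ u = ⊤) (v : K) : (v : M) ∈ R ∙ (u : M) := by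
  obtain ⟨r, hr⟩ := mem_span_singleton.mp (eq_top_iff'.mp hu v)
  exact mem_span_singleton.mpr ⟨r, congrArg Subtype.val hr⟩

theorem span_singleton_le_or_le_of_isLocalModule {x y : M}
    (h : IsLocalModule R (span R {x, y})) : R ∙ x ≤ R ∙ y ∨ R ∙ y ≤ R ∙ x := by
  have hx : x ∈ span R {x, y} := subset_span (by simp)
  have hy : y ∈ span R {x, y} := subset_span (by simp)
  have hspan : span R {(⟨x, hx⟩ : span R {x, y}), ⟨y, hy⟩} = ⊤ := by
    apply map_injective_of_injective (span R {x, y}).injective_subtype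
    rw [map_span, Submodule.map_top, range_subtype, Set.image_pair]
    rfl
  rw [span_singleton_le_iff_mem, span_singleton_le_iff_mem]
  rcases h.span_singleton_eq_top_or_eq_top hspan with hx_top | hy_top
  · exact Or.inr (mem_span_singleton_of_span_singleton_eq_top hx_top ⟨y, hy⟩)
  · exact Or.inl (mem_span_singleton_of_span_singleton_eq_top hy_top ⟨x, hx⟩)

theorem eq_top_of_jacobson_sup_eq_top [Module.Finite R M] {N : Submodule R M}
    (h : Module.jacobson R M ⊔ N = ⊤) : N = ⊤ := by
  by_contra hN
  obtain ⟨P, hP, hNP⟩ := (eq_top_or_exists_le_coatom N).resolve_left hN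
  exact hP.1 (top_le_iff.mp (h ▸ sup_le (sInf_le hP) hNP))

theorem isLocalModule_of_isLocalModule_quotient_jacobson [Module.Finite R M]
    (h : IsLocalModule R (M ⧸ Module.jacobson R M)) : IsLocalModule R M := by
  obtain ⟨C, hC, hle⟩ := h
  refine ⟨C.comap (Module.jacobson R M).mkQ, fun htop => hC ?_, fun N hN => ?_⟩
  · rw [← map_comap_eq_of_surjective (mkQ_surjective _) C, htop, Submodule.map_top, range_mkQ]
  · refine map_le_iff_le_comap.mp (hle _ fun hmap => hN ?_)
    exact eq_top_of_jacobson_sup_eq_top ((map_mkQ_eq_top _ _).mp hmap)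

end Module

section CentralIdempotent

variable {R Q : Type*} [Ring R] [AddCommGroup Q] [Module R Q]

theorem IsUniformMod.smul_eq_zero_or_smul_eq_self (hQ : IsUniformMod R Q) {e : R}
    (he : IsIdempotentElem e) (hc : ∀ r, e * r = r * e) :
    (∀ z : Q, e • z = 0) ∨ (∀ z : Q, e • z = z) := by
  let φ : Q →ₗ[R] Q :=
    { toFun := (e • ·)
      map_add' := smul_add e
      map_smul' := fun r z => by simp only [smul_smul, hc, RingHom.id_apply] }
  have hφφ (z : Q) : φ (φ z) = φ z := by
    simp only [φ, LinearMap.coe_mk, AddHom.coe_mk, smul_smul, he.eq]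
  have hdisj : LinearMap.range φ ⊓ LinearMap.ker φ = ⊥ := by
    refine eq_bot_iff.mpr fun w ⟨⟨z, hz⟩, hw⟩ => ?_
    rw [mem_bot, ← hz, ← hφφ z, hz]
    exact hw
  by_cases hrange : LinearMap.range φ = ⊥
  · exact Or.inl fun z => LinearMap.congr_fun (LinearMap.range_eq_bot.mp hrange) z
  · have hker : LinearMap.ker φ = ⊥ := by_contra fun hker => hQ.2 _ _ hrange hker hdisj
    refine Or.inr fun z => (sub_eq_zero.mp ?_).symm
    exact (LinearMap.ker_eq_bot'.mp hker) (z - φ z) (by rw [map_sub, hφφ, sub_self])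

theorem IsUniformMod.exists_smul_eq_self {ι : Type*} [Fintype ι] (hQ : IsUniformMod R Q)
    {e : ι → R} (he : CompleteOrthogonalIdempotents e) (hc : ∀ i r, e i * r = r * e i) :
    ∃ i, ∀ z : Q, e i • z = z := by
  by_contra! h
  have hzero (i : ι) (z : Q) : e i • z = 0 :=
    ((hQ.smul_eq_zero_or_smul_eq_self (he.idem i) (hc i)).resolve_right
      fun hi => (h i).elim fun w hw => hw (hi w)) z
  obtain ⟨z, hz⟩ := @exists_ne Q hQ.1 0
  apply hz
  rw [← one_smul R z, ← he.complete, Finset.sum_smul]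
  exact Finset.sum_eq_zero fun i _ => hzero i z

end CentralIdempotent

theorem exists_mul_eq_one_of_notMem {R : Type*} [Ring R] {m : Ideal R}
    (hm : ∀ I : Ideal R, IsCoatom I → I = m) {s : R} (hs : s ∉ m) : ∃ t, t * s = 1 := by
  have hspan : Ideal.span {s} = ⊤ := by
    by_contra hne
    obtain ⟨P, hP, hsP⟩ := Ideal.exists_le_maximal _ hne
    exact hs (hm P hP.out ▸ hsP (Ideal.mem_span_singleton_self s))
  exact mem_span_singleton.mp (hspan ▸ mem_top : (1 : R) ∈ Ideal.span {s})

section Pi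

variable {ι : Type*} [DecidableEq ι] {S : ι → Type*} [∀ i, Ring (S i)]
  {Q : Type*} [AddCommGroup Q] [Module (Π i, S i) Q]

theorem Pi.single_one_mul_comm (i : ι) (r : Π i, S i) :
    Pi.single i 1 * r = r * Pi.single i 1 := by
  rw [← Pi.single_mul_left, ← Pi.single_mul_right, one_mul, mul_one]

theorem isLocalModule_of_single_one_smul_eq_self [Nontrivial Q] {i : ι}
    (hloc : ∃! I : Ideal (S i), IsCoatom I) (hQ : IsCyclicMod (Π i, S i) Q)
    (hfix : ∀ z : Q, (Pi.single i 1 : Π i, S i) • z = z) : IsLocalModule (Π i, S i) Q := by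
  obtain ⟨m, hm, hm_uniq⟩ := hloc
  obtain ⟨q, hq_span⟩ := hQ
  have hgen (r : Π i, S i) (hr : r i ∉ m) : q ∈ (Π i, S i) ∙ (r • q) := by
    obtain ⟨t, ht⟩ := exists_mul_eq_one_of_notMem hm_uniq hr
    refine mem_span_singleton.mpr ⟨Pi.single i t, ?_⟩
    rw [smul_smul, ← Pi.single_mul_left, ht, hfix]
  have hq : ∀ z : Q, ∃ r : Π i, S i, r • q = z := fun z =>
    mem_span_singleton.mp (eq_top_iff'.mp hq_span z)
  refine ⟨map (LinearMap.toSpanSingleton _ Q q) (m.comap (Pi.evalRingHom S i)), ?_, ?_⟩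
  · intro htop
    obtain ⟨r, hr, hrq⟩ := eq_top_iff'.mp htop q
    have hr' : (1 - r) i ∉ m := fun h1r =>
      hm.1 ((Ideal.eq_top_iff_one m).mpr (by simpa using m.add_mem h1r hr))
    have := hgen (1 - r) hr'
    rw [sub_smul, one_smul, ← LinearMap.toSpanSingleton_apply, hrq, sub_self,
      span_zero_singleton, mem_bot] at this
    obtain ⟨z, hz⟩ := exists_ne (0 : Q)
    obtain ⟨s, rfl⟩ := hq z
    exact hz (by rw [this, smul_zero])
  · intro N hN z hz
    obtain ⟨r, rfl⟩ := hq z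
    by_cases hr : r i ∈ m
    · exact ⟨r, hr, rfl⟩
    · refine absurd (eq_top_iff'.mpr fun w => ?_) hN
      obtain ⟨s, rfl⟩ := hq w
      exact N.smul_mem s ((span_singleton_le_iff_mem _ N).mpr hz (hgen r hr))

end Pi

theorem stmt18 {ι : Type*} [Fintype ι] (S : ι → Type*) [∀ i, Ring (S i)]
    (hloc : ∀ i, ∃! I : Ideal (S i), IsCoatom I)
    {M : Type*} [AddCommGroup M] [Module (∀ i, S i) M]
    (h : IsCUUniserial (∀ i, S i) M) :
    ∀ A B : Submodule (∀ i, S i) M, A ≤ B ∨ B ≤ A := by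
  classical
  refine le_or_le_of_span_singleton_le_or_le fun x y => ?_
  let K := span (Π i, S i) {x, y}
  by_cases hK : K = ⊥
  · have hxK : (Π i, S i) ∙ x ≤ K := span_mono (by simp)
    exact Or.inl (hxK.trans (hK ▸ bot_le))
  have : Module.Finite (Π i, S i) K := Module.Finite.span_of_finite _ (Set.toFinite _)
  obtain ⟨hcyc, hunif⟩ := h.2 K hK (fg_span (Set.toFinite _))
  -- `ModRadical` is definitionally `Module.jacobson`.
  have : Nontrivial (K ⧸ Module.jacobson (Π i, S i) K) := hunif.1
  obtain ⟨i, hi⟩ := hunif.exists_smul_eq_self (CompleteOrthogonalIdempotents.single S)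
    fun i => Pi.single_one_mul_comm i
  exact span_singleton_le_or_le_of_isLocalModule (isLocalModule_of_isLocalModule_quotient_jacobson
    (isLocalModule_of_single_one_smul_eq_self (hloc i) hcyc hi))
end
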